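/- In a graph embedding, if an edge e is incident with exactly one face f and the cycle of f visits the two θ-orbits of e in interleaved order (cycle x₁, y₁, P₁, x₂, y₂, P₂ where {x₁,y₁} and {x₂,y₂} are the θ-orbits of e and x₂ = σ(x₁), y₂ = σ(y₁)), and every vertex incident with e has flags not all contained in e, then deleting e decreases the genus by exactly 1. -/

import Mathlib

def FPF {F : Type*} (π : Equiv.Perm F) : Prop := π * π = 1 ∧ ∀ x, π x ≠ x

def orbSet {F : Type*} (S : Set (Equiv.Perm F)) (x : F) : Set F :=
  MulAction.orbit (Subgroup.closure S) x

noncomputable def orbCount {F : Type*} (S : Set (Equiv.Perm F)) : ℕ :=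
  Nat.card (MulAction.orbitRel.Quotient (Subgroup.closure S) F)

noncomputable def genus {F : Type*} (θ σ' φ' : Equiv.Perm F) : ℤ :=
  (orbCount {θ, σ'} : ℤ) - orbCount {σ', φ'} - orbCount {θ, φ'} + 2 * orbCount {θ, σ', φ'}

def IsGraphEmb {F : Type*} (θ σ' φ' : Equiv.Perm F) : Prop :=
  FPF θ ∧ FPF σ' ∧ FPF φ' ∧ ∀ x : F, Nat.card (orbSet {θ, σ'} x) = 4

def IsEdgeDeletion {F : Type*} (σ' φ' : Equiv.Perm F) (e : Set F)
    (θ₀ σ₀ φ₀ : Equiv.Perm {f : F // f ∉ e}) (θ : Equiv.Perm F) : Prop :=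
  (∀ a : {f : F // f ∉ e}, (θ₀ a : F) = θ a ∧ (σ₀ a : F) = σ' a) ∧
  (∀ a : {f : F // f ∉ e}, ∃ m : ℕ,
     ((φ' * σ') ^ m) (φ' a) ∉ e ∧ (∀ j < m, ((φ' * σ') ^ j) (φ' a) ∈ e) ∧
     (φ₀ a : F) = ((φ' * σ') ^ m) (φ' a))

/-!
Deleting `e` removes one `⟨θ, σ⟩`-orbit, and we show that vertices, faces and components of the
deleted embedding correspond bijectively to the old ones: in each case the new orbits are the
traces of the old orbits on the complement of `e`. For vertices this holds because the new rotation
`φ₀ σ₀` is the first-return map of `φ σ`. The only face that needs thought is the face of `x`.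
Its walk `(φθ)ᵏ x` never meets `θ x` or `θ (σ x)`, since a face walk never meets its own reverse,
so it crosses `e` exactly at `x` and at `σ x = (φθ)ᵐ x`. This cuts it into two arcs, and the new
face map joins the end of the first arc to the end of the second one, so the flags of this face
outside `e` still form a single face.
-/

section

open Equiv Function

variable {F : Type*}

lemma FPF.apply_apply {π : Perm F} (hπ : FPF π) (y : F) : π (π y) = y :=
  DFunLike.congr_fun hπ.1 y

section orbits

variable {S T : Set (Perm F)} {s : Perm F} {x y z : F}

lemma mem_orbSet_iff : y ∈ orbSet S z ↔ ∃ g ∈ Subgroup.closure S, g z = y :=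
  ⟨fun ⟨⟨g, hg⟩, h⟩ => ⟨g, hg, h⟩, fun ⟨g, hg, h⟩ => ⟨⟨g, hg⟩, h⟩⟩

lemma mem_orbSet_self (y : F) : y ∈ orbSet S y := MulAction.mem_orbit_self y

lemma orbSet_symm (h : y ∈ orbSet S z) : z ∈ orbSet S y := MulAction.mem_orbit_symm.1 h

lemma orbSet_trans (h₁ : y ∈ orbSet S z) (h₂ : z ∈ orbSet S x) : y ∈ orbSet S x := by
  rwa [orbSet, ← MulAction.orbit_eq_iff.2 h₂]

lemma apply_mem_orbSet (hs : s ∈ S) (y : F) : s y ∈ orbSet S y :=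
  mem_orbSet_iff.2 ⟨s, Subgroup.subset_closure hs, rfl⟩

lemma apply_mem_orbSet_iff (hs : s ∈ S) : s y ∈ orbSet S z ↔ y ∈ orbSet S z :=
  ⟨orbSet_trans (orbSet_symm (apply_mem_orbSet hs y)), orbSet_trans (apply_mem_orbSet hs y)⟩

lemma orbSet_mono (hST : S ⊆ T) (h : y ∈ orbSet S z) : y ∈ orbSet T z := by
  obtain ⟨g, hg, rfl⟩ := mem_orbSet_iff.1 h
  exact mem_orbSet_iff.2 ⟨g, Subgroup.closure_mono hST hg, rfl⟩

lemma eq_of_mem_orbSet {β : Type*} (Q : F → β) (hQ : ∀ s ∈ S, ∀ y, Q (s y) = Q y)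
    (h : y ∈ orbSet S z) : Q y = Q z := by
  obtain ⟨g, hg, rfl⟩ := mem_orbSet_iff.1 h
  clear h
  induction hg using Subgroup.closure_induction_left with
  | one => rfl
  | mul_left s hs g _ ih => exact (hQ s hs _).trans ih
  | inv_mul_cancel s hs g _ ih =>
    rw [← ih, ← hQ s hs]
    simp

lemma orbSet_subset_of_mapsTo [Finite F] {A : Set F} (hA : ∀ s ∈ S, Set.MapsTo s A A)
    (hx : x ∈ A) : orbSet S x ⊆ A := by
  have hinv : ∀ s ∈ S, ∀ y, (s y ∈ A) = (y ∈ A) := by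
    intro s hs y
    refine propext ⟨fun hy => ?_, fun hy => hA s hs hy⟩
    have hbij := (A.toFinite.injOn_iff_bijOn_of_mapsTo (hA s hs)).1 s.injective.injOn
    obtain ⟨w, hw, hwy⟩ := hbij.surjOn hy
    exact s.injective hwy ▸ hw
  intro y hy
  exact (eq_of_mem_orbSet (· ∈ A) hinv hy).symm ▸ hx

end orbits

abbrev Orbits {α : Type*} (S : Set (Perm α)) : Type _ :=
  MulAction.orbitRel.Quotient (Subgroup.closure S) α

lemma Orbits.mk_eq_mk_iff {α : Type*} {S : Set (Perm α)} {a b : α} :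
    (Quotient.mk'' a : Orbits S) = Quotient.mk'' b ↔ a ∈ orbSet S b :=
  Quotient.eq''.trans MulAction.orbitRel_apply

section count

variable {e : Set F} {S : Set (Perm F)} {S₀ : Set (Perm {y : F // y ∉ e})}

def OrbitsAgreeOff (e : Set F) (S : Set (Perm F)) (S₀ : Set (Perm {y : F // y ∉ e})) : Prop :=
  ∀ a b : {y : F // y ∉ e}, a ∈ orbSet S₀ b ↔ (a : F) ∈ orbSet S b

def valOrbits (hS : OrbitsAgreeOff e S S₀) :
    Orbits S₀ → Orbits S :=
  Quotient.map' Subtype.val fun a b h => (hS a b).1 h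

lemma valOrbits_injective (hS : OrbitsAgreeOff e S S₀) :
    Injective (valOrbits hS) := by
  rintro ⟨a⟩ ⟨b⟩ h
  exact Orbits.mk_eq_mk_iff.2 ((hS a b).2 (Orbits.mk_eq_mk_iff.1 h))

lemma orbCount_eq_of_forall_exists (hS : OrbitsAgreeOff e S S₀)
    (hcover : ∀ y : F, ∃ a : {y : F // y ∉ e}, y ∈ orbSet S a) :
    orbCount S = orbCount S₀ := by
  refine (Nat.card_eq_of_bijective (valOrbits hS) ⟨valOrbits_injective hS, ?_⟩).symm
  rintro ⟨y⟩
  obtain ⟨a, ha⟩ := hcover y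
  exact ⟨Quotient.mk'' a, (Orbits.mk_eq_mk_iff.2 ha).symm⟩

lemma orbCount_eq_add_one [Finite F] (hS : OrbitsAgreeOff e S S₀) {x : F}
    (he : e = orbSet S x) : orbCount S = orbCount S₀ + 1 := by
  let ψ : Orbits S₀ ⊕ Unit → Orbits S := Sum.elim (valOrbits hS) fun _ => Quotient.mk'' x
  have hψ : Bijective ψ := by
    refine ⟨?_, ?_⟩
    · have hne : ∀ a : {y : F // y ∉ e}, (Quotient.mk'' (a : F) : Orbits S) ≠ Quotient.mk'' x :=
        fun a h => a.2 (he.ge (Orbits.mk_eq_mk_iff.1 h))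
      rintro (q | ⟨⟩) (q' | ⟨⟩) h
      · exact congrArg Sum.inl (valOrbits_injective hS h)
      · induction q using Quotient.inductionOn' with | h a => exact absurd h (hne a)
      · induction q' using Quotient.inductionOn' with | h b => exact absurd h.symm (hne b)
      · rfl
    · rintro ⟨y⟩
      by_cases hy : y ∈ e
      · exact ⟨Sum.inr (), (Orbits.mk_eq_mk_iff.2 (he.le hy)).symm⟩
      · exact ⟨Sum.inl (Quotient.mk'' ⟨y, hy⟩), rfl⟩
  rw [orbCount, orbCount, ← Nat.card_eq_of_bijective ψ hψ, Nat.card_sum,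
    Nat.card_unique (α := Unit)]

lemma coe_mem_orbSet_of_mem_orbSet
    (h : ∀ s₀ ∈ S₀, ∀ a : {y : F // y ∉ e}, (s₀ a : F) ∈ orbSet S a) {a b : {y : F // y ∉ e}}
    (hab : a ∈ orbSet S₀ b) : (a : F) ∈ orbSet S b :=
  Orbits.mk_eq_mk_iff.1 <|
    eq_of_mem_orbSet (fun a : {y : F // y ∉ e} => (Quotient.mk'' (a : F) : Orbits S))
      (fun s₀ hs₀ a => Orbits.mk_eq_mk_iff.2 (h s₀ hs₀ a)) hab

lemma exists_mem_orbSet_of_not_subset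
    (h : ∀ y ∈ e, ¬ orbSet S y ⊆ e) (y : F) : ∃ a : {y : F // y ∉ e}, y ∈ orbSet S a := by
  by_cases hy : y ∈ e
  · obtain ⟨u, hu, hue⟩ := Set.not_subset.1 (h y hy)
    exact ⟨⟨u, hue⟩, orbSet_symm hu⟩
  · exact ⟨⟨y, hy⟩, mem_orbSet_self y⟩

end count

open Classical in
noncomputable def extendClass (e : Set F) (S₀ : Set (Perm {y : F // y ∉ e})) (q₀ : Orbits S₀)
    (y : F) : Orbits S₀ :=
  if h : y ∈ e then q₀ else Quotient.mk'' ⟨y, h⟩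

section extendClass

variable {e : Set F} {S₀ : Set (Perm {y : F // y ∉ e})} {q₀ : Orbits S₀}

lemma extendClass_of_mem {y : F} (h : y ∈ e) : extendClass e S₀ q₀ y = q₀ := dif_pos h

lemma extendClass_coe (a : {y : F // y ∉ e}) : extendClass e S₀ q₀ a = Quotient.mk'' a :=
  dif_neg a.2

lemma extendClass_coe_apply {s₀ : Perm {y : F // y ∉ e}} (hs₀ : s₀ ∈ S₀)
    (a : {y : F // y ∉ e}) : extendClass e S₀ q₀ (s₀ a) = extendClass e S₀ q₀ a := by
  rw [extendClass_coe, extendClass_coe, Orbits.mk_eq_mk_iff]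
  exact apply_mem_orbSet hs₀ a

lemma extendClass_apply_eq {s : Perm F} {s₀ : Perm {y : F // y ∉ e}} (hs₀ : s₀ ∈ S₀)
    (hcoe : ∀ a, (s₀ a : F) = s a) (hs : ∀ y, s y ∈ e ↔ y ∈ e) (y : F) :
    extendClass e S₀ q₀ (s y) = extendClass e S₀ q₀ y := by
  by_cases hy : y ∈ e
  · rw [extendClass_of_mem hy, extendClass_of_mem ((hs y).2 hy)]
  · have := extendClass_coe_apply (q₀ := q₀) hs₀ ⟨y, hy⟩
    rwa [hcoe] at this

lemma mem_orbSet_of_coe_mem_orbSet {S : Set (Perm F)} (q₀ : Orbits S₀)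
    (hQ : ∀ s ∈ S, ∀ y, extendClass e S₀ q₀ (s y) = extendClass e S₀ q₀ y)
    {a b : {y : F // y ∉ e}} (h : (a : F) ∈ orbSet S b) : a ∈ orbSet S₀ b := by
  have := eq_of_mem_orbSet _ hQ h
  rwa [extendClass_coe, extendClass_coe, Orbits.mk_eq_mk_iff] at this

end extendClass

section dihedral

variable {G : Type*} [Group G] {α β g : G}

lemma exists_zpow_of_mem_closure_pair (hα : α * α = 1) (hβ : β * β = 1)
    (hg : g ∈ Subgroup.closure {α, β}) : ∃ t : ℤ, g = (β * α) ^ t ∨ α * g = (β * α) ^ t := by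
  have hαβ : α * β = (β * α)⁻¹ := by
    rw [mul_inv_rev, inv_eq_of_mul_eq_one_right hα, inv_eq_of_mul_eq_one_right hβ]
  have hstep : ∀ s ∈ ({α, β} : Set G), ∀ g : G,
      (∃ t : ℤ, g = (β * α) ^ t ∨ α * g = (β * α) ^ t) →
      ∃ t : ℤ, s * g = (β * α) ^ t ∨ α * (s * g) = (β * α) ^ t := by
    rintro s (rfl | rfl) g ⟨t, ht | ht⟩
    · exact ⟨t, .inr (by rw [← mul_assoc, hα, one_mul, ht])⟩
    · exact ⟨t, .inl ht⟩
    · refine ⟨t - 1, .inr ?_⟩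
      rw [← mul_assoc, hαβ, ht, ← zpow_neg_one, ← zpow_add, neg_add_eq_sub]
    · refine ⟨1 + t, .inl ?_⟩
      rw [zpow_one_add, ← ht, mul_assoc, ← mul_assoc α, hα, one_mul]
  induction hg using Subgroup.closure_induction_left with
  | one => exact ⟨0, .inl (zpow_zero _).symm⟩
  | mul_left s hs g _ ih => exact hstep s hs g ih
  | inv_mul_cancel s hs g _ ih =>
    have hs' : s⁻¹ = s := by
      rcases hs with rfl | rfl
      exacts [inv_eq_of_mul_eq_one_right hα, inv_eq_of_mul_eq_one_right hβ]
    rw [hs']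
    exact hstep s hs g ih

lemma mul_pow_mul_mul_pow {θ φ : G} (hθ : θ * θ = 1) (hφ : φ * φ = 1) (k : ℕ) :
    (φ * θ) ^ k * θ * (φ * θ) ^ k = θ := by
  induction k with
  | zero => simp
  | succ k ih =>
    calc (φ * θ) ^ (k + 1) * θ * (φ * θ) ^ (k + 1)
        = (φ * θ) ^ k * (φ * θ) * θ * ((φ * θ) * (φ * θ) ^ k) := by rw [← pow_succ, ← pow_succ']
      _ = (φ * θ) ^ k * θ * (φ * θ) ^ k := by
        simp only [mul_assoc]
        rw [← mul_assoc θ θ, hθ, one_mul, ← mul_assoc φ φ, hφ, one_mul]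
      _ = θ := ih

end dihedral

lemma exists_pow_of_mem_orbSet_pair [Finite F] {α β : Perm F} (hα : α * α = 1)
    (hβ : β * β = 1) {y z : F} (h : y ∈ orbSet {α, β} z) :
    ∃ n : ℕ, y = ((β * α) ^ n) z ∨ α y = ((β * α) ^ n) z := by
  obtain ⟨g, hg, rfl⟩ := mem_orbSet_iff.1 h
  obtain ⟨t, ht⟩ := exists_zpow_of_mem_closure_pair hα hβ hg
  obtain ⟨n, hn : (β * α) ^ n = (β * α) ^ t⟩ :=
    mem_powers_iff_mem_zpowers.2 (Subgroup.zpow_mem_zpowers (β * α) t)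
  refine ⟨n, ?_⟩
  rw [hn]
  rcases ht with ht | ht
  · exact .inl (by rw [ht])
  · exact .inr (by rw [← Perm.mul_apply, ht])

def IsFirstReturn (e : Set F) (f : Perm F) (τ : Perm {y : F // y ∉ e}) : Prop :=
  ∀ a, ∃ k, 0 < k ∧ (τ a : F) = (f ^ k) a ∧ ∀ i, 0 < i → i < k → (f ^ i) a ∈ e

lemma IsFirstReturn.exists_pow_apply_eq {e : Set F} {f : Perm F} {τ : Perm {y : F // y ∉ e}}
    (hτ : IsFirstReturn e f τ) (n : ℕ) (a : {y : F // y ∉ e}) (ha : (f ^ n) a ∉ e) :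
    ∃ j : ℕ, ((τ ^ j) a : F) = (f ^ n) a := by
  induction n using Nat.strong_induction_on generalizing a with
  | _ n ih =>
  rcases Nat.eq_zero_or_pos n with rfl | hn
  · exact ⟨0, rfl⟩
  obtain ⟨k, hk, hτa, hmem⟩ := hτ a
  have hkn : k ≤ n := by
    by_contra! h
    exact ha (hmem n hn h)
  have hsplit : (f ^ (n - k)) (τ a) = (f ^ n) a := by
    rw [hτa, ← Perm.mul_apply, ← pow_add, Nat.sub_add_cancel hkn]
  obtain ⟨j, hj⟩ := ih (n - k) (by omega) (τ a) (hsplit ▸ ha)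
  exact ⟨j + 1, by rw [pow_succ, Perm.mul_apply, hj, hsplit]⟩

-- The indices in `(0, M)` and in `(M, N)` form two arcs, joined at their ends by `hcross`.
lemma eq_of_succ_eq_of_ne {β : Type*} (q : ℕ → β) {M N : ℕ} (hMN : M < N)
    (hstep : ∀ i, 0 < i → i + 1 < N → i ≠ M → i + 1 ≠ M → q (i + 1) = q i)
    (hcross : 1 < M → M + 1 < N → q (M - 1) = q (N - 1)) {i j : ℕ}
    (hi : 0 < i) (hiN : i < N) (hiM : i ≠ M) (hj : 0 < j) (hjN : j < N) (hjM : j ≠ M) :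
    q i = q j := by
  have harc : ∀ a n, 0 < a → a ≤ n → n < N → (n < M ∨ M < a) → q a = q n := by
    intro a n ha han hn hside
    induction n, han using Nat.le_induction with
    | base => rfl
    | succ n han ih =>
      rw [ih (by omega) (by omega), hstep n (by omega) hn (by omega) (by omega)]
  have hlow : ∀ i, 0 < i → i < M → q i = q (M - 1) := fun i h₁ h₂ =>
    harc i (M - 1) h₁ (by omega) (by omega) (.inl (by omega))
  have hhigh : ∀ i, M < i → i < N → q i = q (N - 1) := fun i h₁ h₂ =>
    harc i (N - 1) (by omega) (by omega) (by omega) (.inr h₁)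
  rcases hiM.lt_or_gt with hi' | hi' <;> rcases hjM.lt_or_gt with hj' | hj'
  · rw [hlow i hi hi', hlow j hj hj']
  · rw [hlow i hi hi', hhigh j hj' hjN, hcross (by omega) (by omega)]
  · rw [hhigh i hi' hiN, hlow j hj hj', hcross (by omega) (by omega)]
  · rw [hhigh i hi' hiN, hhigh j hj' hjN]

section face

variable {θ σ φ : Perm F} {e : Set F} {x : F} {m : ℕ} {β : Type*}

-- Otherwise `(φ θ) ^ (p + q) y = θ y`, and the midpoint of this walk is fixed by `θ` or `φ`.
lemma mul_pow_apply_ne_apply (hθ : FPF θ) (hφ : FPF φ) (p q : ℕ) (y : F) :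
    ((φ * θ) ^ p) y ≠ θ (((φ * θ) ^ q) y) := by
  set ρ := φ * θ
  have hrev : ∀ k z, (ρ ^ k) (θ ((ρ ^ k) z)) = θ z := fun k z => by
    rw [← Perm.mul_apply, ← Perm.mul_apply, mul_pow_mul_mul_pow hθ.1 hφ.1 k]
  intro h
  have h' : (ρ ^ (q + p)) y = θ y := by rw [pow_add, Perm.mul_apply, h, hrev]
  obtain ⟨r, hr | hr⟩ := Nat.even_or_odd' (q + p)
  · apply hθ.2 ((ρ ^ r) y)
    apply (ρ ^ r).injective
    rw [hrev, ← h', hr, two_mul, pow_add, Perm.mul_apply]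
  · have h₁ : (ρ ^ r) y = θ ((ρ ^ (r + 1)) y) := by
      apply (ρ ^ (r + 1)).injective
      rw [hrev, ← h', hr, ← Perm.mul_apply, ← pow_add]
      ring_nf
    apply hφ.2 ((ρ ^ (r + 1)) y)
    calc φ ((ρ ^ (r + 1)) y) = φ (θ (θ ((ρ ^ (r + 1)) y))) := by rw [hθ.apply_apply]
      _ = (ρ ^ (r + 1)) y := by rw [← h₁, pow_succ', Perm.mul_apply]; rfl

lemma orbSet_pair_eq [Finite F] (hθ : FPF θ) (hσ : FPF σ)
    (h4 : Nat.card (orbSet {θ, σ} x) = 4) : orbSet {θ, σ} x = {x, θ x, σ x, θ (σ x)} := by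
  have hθS : θ ∈ ({θ, σ} : Set (Perm F)) := .inl rfl
  have hσS : σ ∈ ({θ, σ} : Set (Perm F)) := .inr rfl
  have hsub : ({x, θ x, σ x, θ (σ x)} : Set F) ⊆ orbSet {θ, σ} x := by
    rintro y (rfl | rfl | rfl | rfl)
    · exact mem_orbSet_self y
    · exact apply_mem_orbSet hθS x
    · exact apply_mem_orbSet hσS x
    · exact orbSet_trans (apply_mem_orbSet hθS _) (apply_mem_orbSet hσS x)
  have hθσ : θ x ≠ σ x := by
    intro h
    have hsub' : orbSet {θ, σ} x ⊆ {x, θ x} := by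
      refine orbSet_subset_of_mapsTo ?_ (.inl rfl)
      rintro s (rfl | rfl) y (rfl | rfl)
      · exact .inr rfl
      · exact .inl (hθ.apply_apply x)
      · exact .inr h.symm
      · exact .inl (by rw [h, hσ.apply_apply])
    have := (Set.ncard_le_ncard hsub').trans (Set.ncard_insert_le _ _)
    rw [← Nat.card_coe_set_eq, h4, Set.ncard_singleton] at this
    omega
  have hcard : ({x, θ x, σ x, θ (σ x)} : Set F).ncard = 4 := by
    have h₁ : x ≠ θ (σ x) := fun h => hθσ (by simpa [hθ.apply_apply] using congrArg θ h)
    rw [Set.ncard_insert_of_notMem, Set.ncard_insert_of_notMem, Set.ncard_pair (hθ.2 _).symm]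
    · simp only [Set.mem_insert_iff, Set.mem_singleton_iff, not_or]
      exact ⟨hθσ, θ.injective.ne (hσ.2 x).symm⟩
    · simp only [Set.mem_insert_iff, Set.mem_singleton_iff, not_or]
      exact ⟨(hθ.2 x).symm, (hσ.2 x).symm, h₁⟩
  exact (Set.eq_of_subset_of_ncard_le hsub (by rw [hcard, ← Nat.card_coe_set_eq, h4])).symm

lemma orbSet_subset_orbSet_of_pow_apply_eq [Finite F] (hθ : FPF θ) (hσ : FPF σ)
    (h4 : Nat.card (orbSet {θ, σ} x) = 4) (hm : ((φ * θ) ^ m) x = σ x) :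
    orbSet {θ, σ} x ⊆ orbSet {θ, φ} x := by
  have hθS : θ ∈ ({θ, φ} : Set (Perm F)) := .inl rfl
  have hρ : φ * θ ∈ Subgroup.closure {θ, φ} :=
    mul_mem (Subgroup.subset_closure (.inr rfl)) (Subgroup.subset_closure hθS)
  have hσx : σ x ∈ orbSet {θ, φ} x := hm ▸ mem_orbSet_iff.2 ⟨_, pow_mem hρ m, rfl⟩
  rw [orbSet_pair_eq hθ hσ h4]
  rintro y (rfl | rfl | rfl | rfl)
  · exact mem_orbSet_self _
  · exact apply_mem_orbSet hθS _
  · exact hσx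
  · exact orbSet_trans (apply_mem_orbSet hθS _) hσx

lemma mul_pow_apply_eq_or_eq_of_mem (hθ : FPF θ) (hφ : FPF φ) {k : ℕ}
    (he : e ⊆ {x, θ x, σ x, θ (σ x)}) (hm : ((φ * θ) ^ m) x = σ x) (hk : ((φ * θ) ^ k) x ∈ e) :
    ((φ * θ) ^ k) x = x ∨ ((φ * θ) ^ k) x = σ x := by
  rcases he hk with h | h | h | h
  · exact .inl h
  · exact absurd h (mul_pow_apply_ne_apply hθ hφ k 0 x)
  · exact .inr h
  · exact absurd (h.trans (by rw [hm])) (mul_pow_apply_ne_apply hθ hφ k m x)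

-- `a` and `b` precede `σ x` and `x` on the face walk; the new face map jumps from `θ a` to `θ b`.
lemma eq_across_edge (hσ : FPF σ) (hφ : FPF φ)
    (heθ : ∀ y, θ y ∈ e ↔ y ∈ e) (hσx : σ x ∈ e) (Q : F → β) (hQθ : ∀ y, Q (θ y) = Q y)
    (hQjump : ∀ y ∉ e, φ y ∈ e → φ (σ (φ y)) ∉ e → Q (φ (σ (φ y))) = Q y)
    {a b : F} (ha : a ∉ e) (hb : b ∉ e) (ha' : φ (θ a) = σ x) (hb' : φ (θ b) = x) :
    Q a = Q b := by
  have hjump : φ (σ (φ (θ a))) = θ b := by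
    rw [ha', hσ.apply_apply, ← hb', hφ.apply_apply]
  have key := hQjump (θ a) ((heθ a).not.2 ha) (ha' ▸ hσx) (hjump ▸ (heθ b).not.2 hb)
  rw [hjump, hQθ, hQθ] at key
  exact key.symm

lemma eq_of_mul_pow_apply_notMem [Finite F] (hθ : FPF θ) (hσ : FPF σ) (hφ : FPF φ)
    (he : e = {x, θ x, σ x, θ (σ x)}) (heθ : ∀ y, θ y ∈ e ↔ y ∈ e) (hm : ((φ * θ) ^ m) x = σ x)
    (Q : F → β) (hQθ : ∀ y, Q (θ y) = Q y) (hQφ : ∀ y ∉ e, φ y ∉ e → Q (φ y) = Q y)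
    (hQjump : ∀ y ∉ e, φ y ∈ e → φ (σ (φ y)) ∉ e → Q (φ (σ (φ y))) = Q y)
    {k l : ℕ} (hk : ((φ * θ) ^ k) x ∉ e) (hl : ((φ * θ) ^ l) x ∉ e) :
    Q (((φ * θ) ^ k) x) = Q (((φ * θ) ^ l) x) := by
  set ρ := φ * θ
  set N := minimalPeriod ρ x
  have hN : 0 < N := minimalPeriod_pos_of_mem_periodicPts (ρ.injective.mem_periodicPts x)
  have hmod : ∀ n, (ρ ^ (n % N)) x = (ρ ^ n) x := fun n => iterate_mod_minimalPeriod_eq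
  have hsucc : ∀ i, (ρ ^ (i + 1)) x = φ (θ ((ρ ^ i) x)) := fun i => by rw [pow_succ']; rfl
  have hxe : x ∈ e := by simp [he]
  have hσxe : σ x ∈ e := by simp [he]
  set M := m % N
  have hMN : M < N := Nat.mod_lt m hN
  have hM : (ρ ^ M) x = σ x := (hmod m).trans hm
  have hnotMem : ∀ i, 0 < i → i < N → i ≠ M → (ρ ^ i) x ∉ e := by
    intro i hi hiN hiM hie
    rcases mul_pow_apply_eq_or_eq_of_mem hθ hφ he.le hm hie with h | h
    · exact hi.ne' (iterate_injOn_Iio_minimalPeriod hiN hN h)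
    · exact hiM (iterate_injOn_Iio_minimalPeriod hiN hMN (h.trans hM.symm))
  have hrange : ∀ n, (ρ ^ n) x ∉ e → 0 < n % N ∧ n % N ≠ M := fun n hn =>
    ⟨Nat.pos_of_ne_zero fun h => hn (by rw [← hmod, h]; exact hxe),
      fun h => hn (by rw [← hmod, h, hM]; exact hσxe)⟩
  obtain ⟨hk₀, hkM⟩ := hrange k hk
  obtain ⟨hl₀, hlM⟩ := hrange l hl
  rw [← hmod k, ← hmod l]
  refine eq_of_succ_eq_of_ne (fun i => Q ((ρ ^ i) x)) hMN (fun i h₁ h₂ h₃ h₄ => ?_)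
    (fun h₁ h₂ => ?_) hk₀ (Nat.mod_lt k hN) hkM hl₀ (Nat.mod_lt l hN) hlM
  · have hi := hnotMem i h₁ (by omega) h₃
    have hi' := hsucc i ▸ hnotMem (i + 1) (by omega) h₂ h₄
    exact (hsucc i).symm ▸ (hQφ _ ((heθ _).not.2 hi) hi').trans (hQθ _)
  · refine eq_across_edge hσ hφ heθ hσxe Q hQθ hQjump (hnotMem _ (by omega) (by omega) (by omega))
      (hnotMem _ (by omega) (by omega) (by omega)) ?_ ?_
    · rw [← hsucc, Nat.sub_add_cancel (by omega : 1 ≤ M), hM]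
    · rw [← hsucc, Nat.sub_add_cancel hN]
      exact iterate_minimalPeriod

lemma eq_of_mem_orbSet_of_notMem [Finite F] (hθ : FPF θ) (hσ : FPF σ) (hφ : FPF φ)
    (he : e = {x, θ x, σ x, θ (σ x)}) (heθ : ∀ y, θ y ∈ e ↔ y ∈ e) (hm : ((φ * θ) ^ m) x = σ x)
    (Q : F → β) (hQθ : ∀ y, Q (θ y) = Q y) (hQφ : ∀ y ∉ e, φ y ∉ e → Q (φ y) = Q y)
    (hQjump : ∀ y ∉ e, φ y ∈ e → φ (σ (φ y)) ∉ e → Q (φ (σ (φ y))) = Q y)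
    {y z : F} (hy : y ∈ orbSet {θ, φ} x) (hye : y ∉ e) (hz : z ∈ orbSet {θ, φ} x) (hze : z ∉ e) :
    Q y = Q z := by
  have hwalk : ∀ y ∈ orbSet {θ, φ} x, y ∉ e →
      ∃ n, ((φ * θ) ^ n) x ∉ e ∧ Q y = Q (((φ * θ) ^ n) x) := by
    intro y hy hye
    obtain ⟨n, hn | hn⟩ := exists_pow_of_mem_orbSet_pair hθ.1 hφ.1 hy
    · exact ⟨n, hn ▸ hye, congrArg Q hn⟩
    · exact ⟨n, hn ▸ (heθ y).not.2 hye, by rw [← hn, hQθ]⟩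
  obtain ⟨k, hk, hyk⟩ := hwalk y hy hye
  obtain ⟨l, hl, hzl⟩ := hwalk z hz hze
  rw [hyk, hzl]
  exact eq_of_mul_pow_apply_notMem hθ hσ hφ he heθ hm Q hQθ hQφ hQjump hk hl

lemma exists_mem_orbSet_notMem [Finite F] (he : e = orbSet {θ, σ} x)
    (hef : e ⊆ orbSet {θ, φ} x) (hx : ¬ orbSet {σ, φ} x ⊆ e) :
    ∃ u ∈ orbSet {θ, φ} x, u ∉ e := by
  by_contra! h
  refine hx (orbSet_subset_of_mapsTo ?_ (he ▸ mem_orbSet_self x))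
  rintro s (rfl | rfl) y hy
  · exact he ▸ (apply_mem_orbSet_iff (.inr rfl)).2 (he ▸ hy)
  · exact h _ ((apply_mem_orbSet_iff (.inr rfl)).2 (hef hy))

end face

namespace IsEdgeDeletion

variable {θ σ φ : Perm F} {e : Set F} {θ₀ σ₀ φ₀ : Perm {y : F // y ∉ e}} {x : F} {m : ℕ}
  {S₀ : Set (Perm {y : F // y ∉ e})}

lemma coe_θ₀_apply (hdel : IsEdgeDeletion σ φ e θ₀ σ₀ φ₀ θ) (a : {y : F // y ∉ e}) :
    (θ₀ a : F) = θ a :=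
  (hdel.1 a).1

lemma coe_σ₀_apply (hdel : IsEdgeDeletion σ φ e θ₀ σ₀ φ₀ θ) (a : {y : F // y ∉ e}) :
    (σ₀ a : F) = σ a :=
  (hdel.1 a).2

lemma coe_φ₀_apply_of_notMem (hdel : IsEdgeDeletion σ φ e θ₀ σ₀ φ₀ θ) {a : {y : F // y ∉ e}}
    (ha : φ a ∉ e) : (φ₀ a : F) = φ a := by
  obtain ⟨m, -, hm, h₀⟩ := hdel.2 a
  obtain rfl : m = 0 := by
    by_contra hm₀
    exact ha (by simpa using hm 0 (Nat.pos_of_ne_zero hm₀))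
  simpa using h₀

lemma coe_φ₀_apply_of_mem (hdel : IsEdgeDeletion σ φ e θ₀ σ₀ φ₀ θ) {a : {y : F // y ∉ e}}
    (ha : φ a ∈ e) (ha' : φ (σ (φ a)) ∉ e) : (φ₀ a : F) = φ (σ (φ a)) := by
  obtain ⟨m, hm₁, hm, h₀⟩ := hdel.2 a
  obtain rfl : m = 1 := by
    rcases Nat.lt_trichotomy m 1 with h | h | h
    · obtain rfl : m = 0 := by omega
      exact absurd ha (by simpa using hm₁)
    · exact h
    · exact absurd (by simpa using hm 1 h) ha'
  simpa using h₀

lemma coe_φ₀_mem_orbSet (hdel : IsEdgeDeletion σ φ e θ₀ σ₀ φ₀ θ) {S : Set (Perm F)} (hφ : φ ∈ S)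
    (hσ : ∀ y ∈ e, σ y ∈ orbSet S y) (a : {y : F // y ∉ e}) : (φ₀ a : F) ∈ orbSet S a := by
  obtain ⟨m, -, hm, h₀⟩ := hdel.2 a
  have hwalk : ∀ j ≤ m, ((φ * σ) ^ j) (φ a) ∈ orbSet S a := by
    intro j hj
    induction j with
    | zero => exact apply_mem_orbSet hφ a
    | succ j ih =>
      rw [pow_succ', Perm.mul_apply, Perm.mul_apply]
      exact orbSet_trans (apply_mem_orbSet hφ _)
        (orbSet_trans (hσ _ (hm j (by omega))) (ih (by omega)))
  exact h₀ ▸ hwalk m le_rfl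

lemma isFirstReturn (hdel : IsEdgeDeletion σ φ e θ₀ σ₀ φ₀ θ) :
    IsFirstReturn e (φ * σ) (φ₀ * σ₀) := by
  intro a
  obtain ⟨m, -, hm, h₀⟩ := hdel.2 (σ₀ a)
  have hshift : ∀ j, ((φ * σ) ^ (j + 1)) a = ((φ * σ) ^ j) (φ (σ₀ a)) := fun j => by
    rw [pow_succ, Perm.mul_apply, hdel.coe_σ₀_apply]
    rfl
  refine ⟨m + 1, m.succ_pos, by rw [hshift, ← h₀]; rfl, fun i hi hik => ?_⟩
  obtain ⟨j, rfl⟩ : ∃ j, i = j + 1 := ⟨i - 1, by omega⟩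
  rw [hshift]
  exact hm j (by omega)

lemma extendClass_φ_apply_of_notMem (hdel : IsEdgeDeletion σ φ e θ₀ σ₀ φ₀ θ) (hφ₀ : φ₀ ∈ S₀)
    {q₀ : Orbits S₀} {y : F} (hy : y ∉ e) (hφy : φ y ∉ e) :
    extendClass e S₀ q₀ (φ y) = extendClass e S₀ q₀ y := by
  have := extendClass_coe_apply (q₀ := q₀) hφ₀ ⟨y, hy⟩
  rwa [hdel.coe_φ₀_apply_of_notMem hφy] at this

lemma extendClass_φσφ_apply (hdel : IsEdgeDeletion σ φ e θ₀ σ₀ φ₀ θ) (hφ₀ : φ₀ ∈ S₀)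
    {q₀ : Orbits S₀} {y : F} (hy : y ∉ e) (h₁ : φ y ∈ e) (h₂ : φ (σ (φ y)) ∉ e) :
    extendClass e S₀ q₀ (φ (σ (φ y))) = extendClass e S₀ q₀ y := by
  have := extendClass_coe_apply (q₀ := q₀) hφ₀ ⟨y, hy⟩
  rwa [hdel.coe_φ₀_apply_of_mem h₁ h₂] at this

lemma extendClass_φ_apply [Finite F] (hdel : IsEdgeDeletion σ φ e θ₀ σ₀ φ₀ θ)
    (hθ : FPF θ) (hσ : FPF σ) (hφ : FPF φ) (h4 : Nat.card (orbSet {θ, σ} x) = 4)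
    (he : e = orbSet {θ, σ} x) (hm : ((φ * θ) ^ m) x = σ x) (hθ₀ : θ₀ ∈ S₀) (hφ₀ : φ₀ ∈ S₀)
    {u : F} (hu : u ∈ orbSet {θ, φ} x) (hue : u ∉ e) (y : F) :
    extendClass e S₀ (Quotient.mk'' ⟨u, hue⟩) (φ y) =
      extendClass e S₀ (Quotient.mk'' ⟨u, hue⟩) y := by
  set q₀ : Orbits S₀ := Quotient.mk'' ⟨u, hue⟩
  have he4 : e = {x, θ x, σ x, θ (σ x)} := he.trans (orbSet_pair_eq hθ hσ h4)
  have heθ : ∀ y, θ y ∈ e ↔ y ∈ e := fun y => he ▸ apply_mem_orbSet_iff (.inl rfl)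
  have hef : e ⊆ orbSet {θ, φ} x := he ▸ orbSet_subset_orbSet_of_pow_apply_eq hθ hσ h4 hm
  have hface : ∀ z ∈ orbSet {θ, φ} x, extendClass e S₀ q₀ z = q₀ := by
    intro z hz
    by_cases hze : z ∈ e
    · exact extendClass_of_mem hze
    · exact (eq_of_mem_orbSet_of_notMem hθ hσ hφ he4 heθ hm _
        (extendClass_apply_eq hθ₀ hdel.coe_θ₀_apply heθ)
        (fun y hy hφy => hdel.extendClass_φ_apply_of_notMem hφ₀ hy hφy)
        (fun y hy h₁ h₂ => hdel.extendClass_φσφ_apply hφ₀ hy h₁ h₂) hz hze hu hue).trans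
        (extendClass_coe ⟨u, hue⟩)
  by_cases h : y ∉ e ∧ φ y ∉ e
  · exact hdel.extendClass_φ_apply_of_notMem hφ₀ h.1 h.2
  have hy : y ∈ orbSet {θ, φ} x := by
    rcases not_and_or.1 h with h | h
    · exact hef (not_not.1 h)
    · exact (apply_mem_orbSet_iff (.inr rfl)).1 (hef (not_not.1 h))
  rw [hface _ ((apply_mem_orbSet_iff (.inr rfl)).2 hy), hface y hy]

lemma orbCount_edge [Finite F] (hdel : IsEdgeDeletion σ φ e θ₀ σ₀ φ₀ θ)
    (he : e = orbSet {θ, σ} x) : orbCount {θ, σ} = orbCount {θ₀, σ₀} + 1 := by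
  have heθ : ∀ y, θ y ∈ e ↔ y ∈ e := fun y => he ▸ apply_mem_orbSet_iff (.inl rfl)
  have heσ : ∀ y, σ y ∈ e ↔ y ∈ e := fun y => he ▸ apply_mem_orbSet_iff (.inr rfl)
  refine orbCount_eq_add_one (fun a b => ⟨coe_mem_orbSet_of_mem_orbSet ?_,
    mem_orbSet_of_coe_mem_orbSet (Quotient.mk'' b) ?_⟩) he
  · rintro s₀ (rfl | rfl) a
    · rw [hdel.coe_θ₀_apply]
      exact apply_mem_orbSet (.inl rfl) _
    · rw [hdel.coe_σ₀_apply]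
      exact apply_mem_orbSet (.inr rfl) _
  · rintro s (rfl | rfl)
    · exact extendClass_apply_eq (.inl rfl) hdel.coe_θ₀_apply heθ
    · exact extendClass_apply_eq (.inr rfl) hdel.coe_σ₀_apply heσ

lemma orbCount_vertex [Finite F] (hdel : IsEdgeDeletion σ φ e θ₀ σ₀ φ₀ θ) (hσ : σ * σ = 1)
    (hφ : φ * φ = 1) (hverts : ∀ y ∈ e, ¬ orbSet {σ, φ} y ⊆ e) :
    orbCount {σ, φ} = orbCount {σ₀, φ₀} := by
  refine orbCount_eq_of_forall_exists (fun a b => ⟨coe_mem_orbSet_of_mem_orbSet ?_, fun h => ?_⟩)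
    (exists_mem_orbSet_of_not_subset hverts)
  · rintro s₀ (rfl | rfl) a
    · rw [hdel.coe_σ₀_apply]
      exact apply_mem_orbSet (.inl rfl) _
    · exact hdel.coe_φ₀_mem_orbSet (.inr rfl) (fun y _ => apply_mem_orbSet (.inl rfl) y) a
  have hτ : φ₀ * σ₀ ∈ Subgroup.closure {σ₀, φ₀} :=
    mul_mem (Subgroup.subset_closure (.inr rfl)) (Subgroup.subset_closure (.inl rfl))
  have hreach : ∀ (n : ℕ) (c : {y : F // y ∉ e}), (c : F) = ((φ * σ) ^ n) b →
      c ∈ orbSet {σ₀, φ₀} b := by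
    intro n c hc
    obtain ⟨j, hj⟩ := hdel.isFirstReturn.exists_pow_apply_eq n b (hc ▸ c.2)
    exact mem_orbSet_iff.2 ⟨_, pow_mem hτ j, Subtype.ext (hj.trans hc.symm)⟩
  obtain ⟨n, hn | hn⟩ := exists_pow_of_mem_orbSet_pair hσ hφ h
  · exact hreach n a hn
  · rw [← hdel.coe_σ₀_apply] at hn
    exact (apply_mem_orbSet_iff (.inl rfl)).1 (hreach n (σ₀ a) hn)

lemma orbCount_face [Finite F] (hdel : IsEdgeDeletion σ φ e θ₀ σ₀ φ₀ θ)
    (hθ : FPF θ) (hσ : FPF σ) (hφ : FPF φ) (h4 : Nat.card (orbSet {θ, σ} x) = 4)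
    (he : e = orbSet {θ, σ} x) (hm : ((φ * θ) ^ m) x = σ x) (hx : ¬ orbSet {σ, φ} x ⊆ e) :
    orbCount {θ, φ} = orbCount {θ₀, φ₀} := by
  have heθ : ∀ y, θ y ∈ e ↔ y ∈ e := fun y => he ▸ apply_mem_orbSet_iff (.inl rfl)
  have heσ : ∀ y, σ y ∈ e ↔ y ∈ e := fun y => he ▸ apply_mem_orbSet_iff (.inr rfl)
  have hef : e ⊆ orbSet {θ, φ} x := he ▸ orbSet_subset_orbSet_of_pow_apply_eq hθ hσ h4 hm
  obtain ⟨u, hu, hue⟩ := exists_mem_orbSet_notMem he hef hx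
  refine orbCount_eq_of_forall_exists (fun a b => ⟨coe_mem_orbSet_of_mem_orbSet ?_,
    mem_orbSet_of_coe_mem_orbSet (Quotient.mk'' ⟨u, hue⟩) ?_⟩) fun y => ?_
  · rintro s₀ (rfl | rfl) a
    · rw [hdel.coe_θ₀_apply]
      exact apply_mem_orbSet (.inl rfl) _
    · exact hdel.coe_φ₀_mem_orbSet (.inr rfl)
        (fun y hy => orbSet_trans (hef ((heσ y).2 hy)) (orbSet_symm (hef hy))) a
  · rintro s (rfl | rfl)
    · exact extendClass_apply_eq (.inl rfl) hdel.coe_θ₀_apply heθ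
    · exact hdel.extendClass_φ_apply hθ hσ hφ h4 he hm (.inl rfl) (.inr rfl) hu hue
  · by_cases hy : y ∈ e
    · exact ⟨⟨u, hue⟩, orbSet_trans (hef hy) (orbSet_symm hu)⟩
    · exact ⟨⟨y, hy⟩, mem_orbSet_self y⟩

lemma orbCount_component [Finite F] (hdel : IsEdgeDeletion σ φ e θ₀ σ₀ φ₀ θ)
    (hθ : FPF θ) (hσ : FPF σ) (hφ : FPF φ) (h4 : Nat.card (orbSet {θ, σ} x) = 4)
    (he : e = orbSet {θ, σ} x) (hm : ((φ * θ) ^ m) x = σ x)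
    (hverts : ∀ y ∈ e, ¬ orbSet {σ, φ} y ⊆ e) :
    orbCount {θ, σ, φ} = orbCount {θ₀, σ₀, φ₀} := by
  have heθ : ∀ y, θ y ∈ e ↔ y ∈ e := fun y => he ▸ apply_mem_orbSet_iff (.inl rfl)
  have heσ : ∀ y, σ y ∈ e ↔ y ∈ e := fun y => he ▸ apply_mem_orbSet_iff (.inr rfl)
  have hef : e ⊆ orbSet {θ, φ} x := he ▸ orbSet_subset_orbSet_of_pow_apply_eq hθ hσ h4 hm
  obtain ⟨u, hu, hue⟩ := exists_mem_orbSet_notMem he hef (hverts x (he ▸ mem_orbSet_self x))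
  refine orbCount_eq_of_forall_exists (fun a b => ⟨coe_mem_orbSet_of_mem_orbSet ?_,
    mem_orbSet_of_coe_mem_orbSet (Quotient.mk'' ⟨u, hue⟩) ?_⟩) fun y => ?_
  · rintro s₀ (rfl | rfl | rfl) a
    · rw [hdel.coe_θ₀_apply]
      exact apply_mem_orbSet (.inl rfl) _
    · rw [hdel.coe_σ₀_apply]
      exact apply_mem_orbSet (.inr (.inl rfl)) _
    · exact hdel.coe_φ₀_mem_orbSet (.inr (.inr rfl))
        (fun y _ => apply_mem_orbSet (.inr (.inl rfl)) y) a
  · rintro s (rfl | rfl | rfl)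
    · exact extendClass_apply_eq (.inl rfl) hdel.coe_θ₀_apply heθ
    · exact extendClass_apply_eq (.inr (.inl rfl)) hdel.coe_σ₀_apply heσ
    · exact hdel.extendClass_φ_apply hθ hσ hφ h4 he hm (.inl rfl) (.inr (.inr rfl)) hu hue
  · obtain ⟨a, ha⟩ := exists_mem_orbSet_of_not_subset hverts y
    exact ⟨a, orbSet_mono (Set.subset_insert _ _) ha⟩

end IsEdgeDeletion

end

theorem stmt18_general {F : Type*} [Fintype F]
    (θ σ' φ' : Equiv.Perm F) (h : IsGraphEmb θ σ' φ') (x : F)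
    (e : Set F) (he : e = orbSet {θ, σ'} x)
    (hinterleaved : ∃ m : ℕ, 0 < m ∧ ((φ' * θ) ^ m) x = σ' x)
    (hverts : ∀ f ∈ e, ¬ orbSet {σ', φ'} f ⊆ e)
    (θ₀ σ₀ φ₀ : Equiv.Perm {f : F // f ∉ e})
    (hdel : IsEdgeDeletion σ' φ' e θ₀ σ₀ φ₀ θ) :
    genus θ σ' φ' - genus θ₀ σ₀ φ₀ = 1 := by
  obtain ⟨hθ, hσ, hφ, h4⟩ := h
  obtain ⟨m, -, hm⟩ := hinterleaved
  rw [genus, genus, hdel.orbCount_edge he, hdel.orbCount_vertex hσ.1 hφ.1 hverts,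
    hdel.orbCount_face hθ hσ hφ (h4 x) he hm (hverts x (he ▸ mem_orbSet_self x)),
    hdel.orbCount_component hθ hσ hφ (h4 x) he hm hverts]
  push_cast
  ring

theorem stmt18 {F : Type*} [Fintype F]
    (θ σ' φ' : Equiv.Perm F) (h : IsGraphEmb θ σ' φ') (x : F)
    (e : Set F) (he : e = orbSet {θ, σ'} x)
    (honeface : Nat.card ((fun f => orbSet {θ, φ'} f) '' e) = 1)
    (hinterleaved : ∃ m : ℕ, 0 < m ∧ ((φ' * θ) ^ m) x = σ' x)
    (hverts : ∀ f ∈ e, ¬ orbSet {σ', φ'} f ⊆ e)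
    (θ₀ σ₀ φ₀ : Equiv.Perm {f : F // f ∉ e})
    (hdel : IsEdgeDeletion σ' φ' e θ₀ σ₀ φ₀ θ) :
    genus θ σ' φ' - genus θ₀ σ₀ φ₀ = 1 :=
  stmt18_general θ σ' φ' h x e he hinterleaved hverts θ₀ σ₀ φ₀ hdel
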